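/- Let d ≥ 2 and r ≥ 3 be integers and let A = V_d^{(r)} be the r-th Veronese configuration whose columns are all nonnegative integer vectors in ℤ^d with coordinate sum r. Then the toric ideal I_A is NOT generated by its set C_A of circuits; in particular I_A is not generated by C_A^sf. -/

import Mathlib

open MvPolynomial

/-- The binomial `X^u - X^v`. -/
noncomputable def binom {σ : Type*} (K : Type*) [Field K] (u v : σ →₀ ℕ) :
    MvPolynomial σ K :=
  MvPolynomial.monomial u 1 - MvPolynomial.monomial v 1

/-- A binomial `X^u - X^v` with `u ≠ v`. -/
def IsBinomial {σ K : Type*} [Field K] (f : MvPolynomial σ K) : Prop :=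
  ∃ u v : σ →₀ ℕ, u ≠ v ∧ f = binom K u v

/-- An exponent vector is squarefree if every entry is at most one. -/
def SqfreeExp {σ : Type*} (u : σ →₀ ℕ) : Prop := ∀ i, u i ≤ 1

/-- `f` is a circuit of the ideal `I`: an irreducible binomial in `I` such that no
binomial of `I` has support (set of variables) properly contained in that of `f`. -/
def IsCircuit {σ K : Type*} [Field K] (I : Ideal (MvPolynomial σ K))
    (f : MvPolynomial σ K) : Prop :=
  IsBinomial f ∧ f ∈ I ∧ Irreducible f ∧
    ∀ g ∈ I, IsBinomial g → ¬ (g.vars ⊂ f.vars)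

/-- The set `C_A` of circuits of `I`. -/
def Circuits {σ : Type*} (K : Type*) [Field K] (I : Ideal (MvPolynomial σ K)) :
    Set (MvPolynomial σ K) :=
  {f | IsCircuit I f}

/-- The set `C_A^sf` of circuits of `I` having at least one squarefree monomial. -/
def CircuitsSF {σ : Type*} (K : Type*) [Field K] (I : Ideal (MvPolynomial σ K)) :
    Set (MvPolynomial σ K) :=
  {f | IsCircuit I f ∧
    ∃ u v : σ →₀ ℕ, u ≠ v ∧ f = binom K u v ∧ (SqfreeExp u ∨ SqfreeExp v)}

/-- The set `C_A^{sf,sf}` of circuits of `I` both of whose monomials are squarefree. -/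
def CircuitsSFSF {σ : Type*} (K : Type*) [Field K] (I : Ideal (MvPolynomial σ K)) :
    Set (MvPolynomial σ K) :=
  {f | IsCircuit I f ∧
    ∃ u v : σ →₀ ℕ, u ≠ v ∧ f = binom K u v ∧ (SqfreeExp u ∧ SqfreeExp v)}

/-- The monomial map `x_j ↦ t^{a_j}` into the Laurent polynomial ring
`K[t_1^{±1},…,t_d^{±1}] = K[ℤ^d]`, where `a_j` is the `j`-th column of `A`. -/
noncomputable def toricMap (K : Type*) [Field K] {d : ℕ} {ι : Type*}
    (A : Matrix (Fin d) ι ℤ) :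
    MvPolynomial ι K →ₐ[K] AddMonoidAlgebra K (Fin d → ℤ) :=
  MvPolynomial.aeval fun j => AddMonoidAlgebra.single (fun i => A i j) (1 : K)

/-- The toric ideal `I_A` of the configuration `A`. -/
noncomputable def toricIdeal (K : Type*) [Field K] {d : ℕ} {ι : Type*}
    (A : Matrix (Fin d) ι ℤ) : Ideal (MvPolynomial ι K) :=
  RingHom.ker (toricMap K A).toRingHom

/-- `A` is a configuration: its columns are pairwise distinct and lie on a common
affine hyperplane not passing through the origin. -/
structure IsConfiguration {d : ℕ} {ι : Type*} (A : Matrix (Fin d) ι ℤ) : Prop where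
  injective : Function.Injective fun j i => A i j
  hyperplane : ∃ w : Fin d → ℚ, ∀ j, (∑ i, w i * (A i j : ℚ)) = 1

/-- The `r`-th Veronese configuration: columns are the nonnegative integer vectors in
`ℤ^d` with coordinate sum `r`. -/
def Vconfig (d r : ℕ) : Matrix (Fin d) {α : Fin d → ℕ // ∑ i, α i = r} ℤ :=
  fun i α => (α.1 i : ℤ)

/-!
Fix coordinates `i ≠ j` and let `pₖ = (r - k) eᵢ + k eⱼ` for `k ≤ 3`; these are columns of
`V_d^{(r)}` with `p₀ + p₃ = p₁ + p₂` and `3 p₁ = 2 p₀ + p₃`. So `f = x_{p₀} x_{p₃} - x_{p₁} x_{p₂}`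
lies in `I_A`, but `f` is not a circuit: `x_{p₁}³ - x_{p₀}² x_{p₃} ∈ I_A` has smaller support.
No circuit has a monomial dividing `x_{p₀} x_{p₃}`: binomials of `I_A` are homogeneous of degree
at least 2, so such a circuit would be `x_{p₀} x_{p₃} - x_a x_b` with `a + b = p₀ + p₃`, which
forces `{a, b} = {p₁, p₂}`, i.e. the circuit is `f`. Since the polynomials none of whose monomials
divides `x_{p₀} x_{p₃}` form an ideal, the circuits do not generate `f`.
-/

open MvPolynomial

section Binomial

variable {σ K : Type*} [Field K]

lemma neg_binom (u v : σ →₀ ℕ) : -binom K u v = binom K v u :=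
  neg_sub _ _

section DecidableEq

variable [DecidableEq σ]

lemma coeff_binom (u v w : σ →₀ ℕ) :
    coeff w (binom K u v) = (if u = w then 1 else 0) - (if v = w then 1 else 0) := by
  simp [binom, coeff_monomial]

lemma vars_binom {u v : σ →₀ ℕ} (h : u ≠ v) :
    (binom K u v).vars = u.support ∪ v.support := by
  have hsupp : (binom K u v).support = {u, v} := by
    ext w
    by_cases hu : u = w <;> by_cases hv : v = w <;>
      simp_all [MvPolynomial.mem_support_iff, coeff_binom, eq_comm]
  ext i
  simp [MvPolynomial.mem_vars_iff_mem_support, hsupp]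

end DecidableEq

lemma IsCircuit.neg {I : Ideal (MvPolynomial σ K)} {f : MvPolynomial σ K}
    (hf : IsCircuit I f) : IsCircuit I (-f) := by
  obtain ⟨⟨u, v, huv, rfl⟩, hmem, hirr, hmin⟩ := hf
  refine ⟨⟨v, u, huv.symm, neg_binom u v⟩, I.neg_mem hmem,
    Associated.irreducible ⟨-1, mul_neg_one _⟩ hirr, ?_⟩
  rwa [vars_neg]

end Binomial

lemma MvPolynomial.coeff_eq_zero_of_mem_span {σ R : Type*} [CommSemiring R]
    {S : Set (MvPolynomial σ R)} {u : σ →₀ ℕ} (hS : ∀ g ∈ S, ∀ w ≤ u, coeff w g = 0)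
    {p : MvPolynomial σ R} (hp : p ∈ Ideal.span S) : coeff u p = 0 := by
  have hSJ : Ideal.span S ≤ Ideal.span ((fun w => monomial w (1 : R)) '' {w | ¬ w ≤ u}) :=
    Ideal.span_le.mpr fun g hg => mem_ideal_span_monomial_image.mpr fun w hw =>
      ⟨w, fun hwu => mem_support_iff.mp hw (hS g hg w hwu), le_rfl⟩
  by_contra hu
  obtain ⟨w, hwu, hw⟩ := mem_ideal_span_monomial_image.mp (hSJ hp) u (mem_support_iff.mpr hu)
  exact hwu hw

namespace Finsupp

variable {σ : Type*}

lemma eq_of_le_of_degree_le {s u : σ →₀ ℕ} (hsu : s ≤ u) (h : u.degree ≤ s.degree) : s = u := by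
  have hdeg : (u - s).degree = 0 := by
    have := map_add degree s (u - s)
    rw [add_tsub_cancel_of_le hsu] at this
    omega
  exact le_antisymm hsu (tsub_eq_zero_iff_le.mp ((degree_eq_zero_iff _).mp hdeg))

lemma exists_eq_single_add_single_of_degree_eq_two {t : σ →₀ ℕ} (h : t.degree = 2) :
    ∃ a b, t = single a 1 + single b 1 := by
  classical
  obtain ⟨a, b, hab⟩ := Multiset.card_eq_two.mp ((card_toMultiset t).trans h)
  refine ⟨a, b, ?_⟩
  rw [← Finsupp.toMultiset_toFinsupp t, hab, Multiset.insert_eq_cons, ← Multiset.singleton_add,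
    Multiset.toFinsupp_add, Multiset.toFinsupp_singleton, Multiset.toFinsupp_singleton]

end Finsupp

section Toric

variable {K : Type*} [Field K] {d : ℕ} {ι : Type*} {A : Matrix (Fin d) ι ℤ}

variable (A) in
noncomputable def multideg : (ι →₀ ℕ) →ₗ[ℕ] (Fin d → ℤ) :=
  Finsupp.linearCombination ℕ fun j i => A i j

variable (K A) in
lemma toricMap_monomial (s : ι →₀ ℕ) :
    toricMap K A (monomial s 1) = AddMonoidAlgebra.single (multideg A s) 1 := by
  classical
  rw [toricMap, aeval_monomial, map_one, one_mul, Finsupp.prod]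
  simp only [AddMonoidAlgebra.single_pow, one_pow]
  rw [AddMonoidAlgebra.prod_single]
  simp [multideg, Finsupp.linearCombination_apply, Finsupp.sum]

lemma binom_mem_toricIdeal_iff {s t : ι →₀ ℕ} :
    binom K s t ∈ toricIdeal K A ↔ multideg A s = multideg A t := by
  rw [toricIdeal, RingHom.mem_ker, AlgHom.toRingHom_eq_coe, RingHom.coe_coe, binom, map_sub,
    toricMap_monomial, toricMap_monomial, sub_eq_zero, AddMonoidAlgebra.single_left_inj one_ne_zero]

lemma IsConfiguration.degree_eq_of_multideg_eq (hA : IsConfiguration A) {s t : ι →₀ ℕ}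
    (h : multideg A s = multideg A t) : s.degree = t.degree := by
  obtain ⟨w, hw⟩ := hA.hyperplane
  have key : ∀ s : ι →₀ ℕ, ∑ i, w i * (multideg A s i : ℚ) = s.degree := by
    intro s
    induction s using Finsupp.induction_linear with
    | zero => simp
    | add f g hf hg => simp [mul_add, Finset.sum_add_distrib, hf, hg]
    | single j n => simp [multideg, mul_left_comm _ (n : ℚ), ← Finset.mul_sum, hw]
  exact_mod_cast (key s).symm.trans (h ▸ key t)

lemma IsConfiguration.two_le_degree_of_binom_mem (hA : IsConfiguration A) {s t : ι →₀ ℕ}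
    (hst : s ≠ t) (h : binom K s t ∈ toricIdeal K A) : 2 ≤ s.degree := by
  have hmd := binom_mem_toricIdeal_iff.mp h
  have hdeg := hA.degree_eq_of_multideg_eq hmd
  by_contra! hlt
  interval_cases hs : s.degree
  · exact hst (((Finsupp.degree_eq_zero_iff s).mp hs).trans
      ((Finsupp.degree_eq_zero_iff t).mp hdeg.symm).symm)
  · obtain ⟨a, rfl⟩ := (Finsupp.sum_eq_one_iff s).mp hs
    obtain ⟨b, rfl⟩ := (Finsupp.sum_eq_one_iff t).mp hdeg.symm
    simp only [multideg, Finsupp.linearCombination_single, one_smul] at hmd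
    exact hst (by rw [hA.injective hmd])

end Toric

section Veronese

variable {K : Type*} [Field K] {d r : ℕ}

lemma isConfiguration_vconfig (hr : r ≠ 0) : IsConfiguration (Vconfig d r) where
  injective a b h := Subtype.ext <| funext fun i => by simpa [Vconfig] using congrFun h i
  hyperplane := ⟨fun _ => (r : ℚ)⁻¹, fun a => by
    rw [← Finset.mul_sum]
    simp [Vconfig, ← Nat.cast_sum, a.2, hr]⟩

lemma multideg_vconfig (s : {α : Fin d → ℕ // ∑ i, α i = r} →₀ ℕ) :
    multideg (Vconfig d r) s = fun i => (Finsupp.linearCombination ℕ Subtype.val s i : ℤ) := by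
  induction s using Finsupp.induction_linear with
  | zero => funext i; simp
  | add f g hf hg => funext i; simp [hf, hg]
  | single a n => funext i; simp [multideg, Vconfig]

lemma binom_mem_toricIdeal_vconfig_iff {s t : {α : Fin d → ℕ // ∑ i, α i = r} →₀ ℕ} :
    binom K s t ∈ toricIdeal K (Vconfig d r) ↔
      Finsupp.linearCombination ℕ Subtype.val s = Finsupp.linearCombination ℕ Subtype.val t := by
  simp only [binom_mem_toricIdeal_iff, multideg_vconfig, funext_iff, Nat.cast_inj]

variable (i j : Fin d) (hr : 3 ≤ r)

def edgeCol (k : Fin 4) : {α : Fin d → ℕ // ∑ l, α l = r} :=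
  ⟨Pi.single i (r - k) + Pi.single j (k : ℕ), by
    have := k.isLt
    simp only [Pi.add_apply, Finset.sum_add_distrib, Finset.sum_pi_single', Finset.mem_univ,
      if_true]
    omega⟩

lemma edgeCol_zero_add_edgeCol_three :
    (edgeCol i j hr 0).1 + (edgeCol i j hr 3).1 = (edgeCol i j hr 1).1 + (edgeCol i j hr 2).1 := by
  funext l
  simp only [edgeCol, Pi.add_apply, Pi.single_apply]
  split_ifs <;> simp <;> omega

lemma three_nsmul_edgeCol_one :
    3 • (edgeCol i j hr 1).1 = 2 • (edgeCol i j hr 0).1 + (edgeCol i j hr 3).1 := by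
  funext l
  simp only [edgeCol, Pi.add_apply, Pi.smul_apply, Pi.single_apply, smul_eq_mul]
  split_ifs <;> simp <;> omega

variable {i j}

lemma edgeCol_injective (hij : i ≠ j) : Function.Injective (edgeCol i j hr) := fun k k' h =>
  Fin.ext (by simpa [edgeCol, hij.symm] using congrFun (congrArg Subtype.val h) j)

lemma eq_edgeCol (hij : i ≠ j) {c : {α : Fin d → ℕ // ∑ l, α l = r}}
    (hc : ∀ l, l ≠ i → l ≠ j → c.1 l = 0) {k : Fin 4} (hk : c.1 j = k) : c = edgeCol i j hr k := by
  have hsum : c.1 i + c.1 j = r := by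
    rw [← Fintype.sum_eq_add i j hij fun l hl => hc l hl.1 hl.2]
    exact c.2
  ext l
  simp only [edgeCol, Pi.add_apply, Pi.single_apply]
  split_ifs with hli hlj hlj
  · exact absurd (hli.symm.trans hlj) hij
  · subst hli; omega
  · subst hlj; simpa using hk
  · simpa using hc l hli hlj

lemma exists_edgeCol_of_add_eq (hij : i ≠ j) {a b : {α : Fin d → ℕ // ∑ l, α l = r}}
    (h : a.1 + b.1 = (edgeCol i j hr 0).1 + (edgeCol i j hr 3).1) :
    ∃ k, a = edgeCol i j hr k ∧ b = edgeCol i j hr k.rev := by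
  have hout : ∀ l, l ≠ i → l ≠ j → a.1 l = 0 ∧ b.1 l = 0 := by
    intro l hli hlj
    have := congrFun h l
    simp [edgeCol, hli, hlj] at this
    omega
  have hj : a.1 j + b.1 j = 3 := by simpa [edgeCol, hij.symm] using congrFun h j
  refine ⟨⟨a.1 j, by omega⟩, eq_edgeCol hr hij (fun l hli hlj => (hout l hli hlj).1) rfl,
    eq_edgeCol hr hij (fun l hli hlj => (hout l hli hlj).2) ?_⟩
  simp only [Fin.val_rev]
  omega

variable (i j) in
noncomputable def outerExp : {α : Fin d → ℕ // ∑ l, α l = r} →₀ ℕ :=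
  Finsupp.single (edgeCol i j hr 0) 1 + Finsupp.single (edgeCol i j hr 3) 1

variable (i j) in
noncomputable def innerExp : {α : Fin d → ℕ // ∑ l, α l = r} →₀ ℕ :=
  Finsupp.single (edgeCol i j hr 1) 1 + Finsupp.single (edgeCol i j hr 2) 1

variable (K i j) in
lemma binom_outerExp_innerExp_mem :
    binom K (outerExp i j hr) (innerExp i j hr) ∈ toricIdeal K (Vconfig d r) := by
  rw [binom_mem_toricIdeal_vconfig_iff]
  simp [outerExp, innerExp, edgeCol_zero_add_edgeCol_three]

lemma outerExp_ne_innerExp (hij : i ≠ j) : outerExp i j hr ≠ innerExp i j hr := by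
  intro h
  have := congrArg (· (edgeCol i j hr 0)) h
  simp [outerExp, innerExp, (edgeCol_injective hr hij).eq_iff] at this

lemma eq_innerExp_of_binom_outerExp_mem (hij : i ≠ j) {t : {α : Fin d → ℕ // ∑ l, α l = r} →₀ ℕ}
    (h : binom K (outerExp i j hr) t ∈ toricIdeal K (Vconfig d r)) (ht : outerExp i j hr ≠ t) :
    t = innerExp i j hr := by
  have hdeg := (isConfiguration_vconfig (by omega)).degree_eq_of_multideg_eq
    (binom_mem_toricIdeal_iff.mp h)
  obtain ⟨a, b, rfl⟩ := Finsupp.exists_eq_single_add_single_of_degree_eq_two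
    (hdeg.symm.trans (by simp [outerExp]))
  rw [binom_mem_toricIdeal_vconfig_iff] at h
  simp only [outerExp, map_add, Finsupp.linearCombination_single, one_smul] at h
  obtain ⟨k, rfl, rfl⟩ := exists_edgeCol_of_add_eq hr hij h.symm
  fin_cases k
  · exact absurd rfl ht
  · rfl
  · exact add_comm _ _
  · exact absurd (add_comm _ _) ht

lemma not_isCircuit_binom_outerExp_innerExp (hij : i ≠ j) :
    ¬ IsCircuit (toricIdeal K (Vconfig d r)) (binom K (outerExp i j hr) (innerExp i j hr)) := by
  rintro ⟨-, -, -, hmin⟩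
  have hne : Finsupp.single (edgeCol i j hr 1) 3 ≠
      Finsupp.single (edgeCol i j hr 0) 2 + Finsupp.single (edgeCol i j hr 3) 1 := by
    intro h
    have := congrArg (· (edgeCol i j hr 1)) h
    simp [(edgeCol_injective hr hij).eq_iff] at this
  refine hmin _ ?_ ⟨_, _, hne, rfl⟩ ?_
  · rw [binom_mem_toricIdeal_vconfig_iff]
    simpa only [map_add, Finsupp.linearCombination_single, one_smul]
      using three_nsmul_edgeCol_one i j hr
  · rw [vars_binom hne, vars_binom (outerExp_ne_innerExp hr hij), Finset.ssubset_iff_of_subset]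
    · exact ⟨edgeCol i j hr 2, by simp [innerExp], by simp [(edgeCol_injective hr hij).eq_iff]⟩
    · intro x
      simp only [outerExp, innerExp, Finset.mem_union, Finsupp.mem_support_iff, Finsupp.add_apply,
        Finsupp.single_apply]
      split_ifs <;> simp

lemma not_le_outerExp_of_isCircuit (hij : i ≠ j) {s t : {α : Fin d → ℕ // ∑ l, α l = r} →₀ ℕ}
    (hst : s ≠ t) (hg : IsCircuit (toricIdeal K (Vconfig d r)) (binom K s t)) :
    ¬ s ≤ outerExp i j hr := by
  intro hsu
  have h2 := (isConfiguration_vconfig (by omega)).two_le_degree_of_binom_mem hst hg.2.1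
  obtain rfl : s = outerExp i j hr :=
    Finsupp.eq_of_le_of_degree_le hsu (by simpa [outerExp] using h2)
  obtain rfl := eq_innerExp_of_binom_outerExp_mem hr hij hg.2.1 hst
  exact not_isCircuit_binom_outerExp_innerExp hr hij hg

lemma coeff_eq_zero_of_mem_circuits (hij : i ≠ j)
    {g : MvPolynomial {α : Fin d → ℕ // ∑ l, α l = r} K}
    (hg : g ∈ Circuits K (toricIdeal K (Vconfig d r))) {w} (hw : w ≤ outerExp i j hr) :
    coeff w g = 0 := by
  obtain ⟨s, t, hst, rfl⟩ := hg.1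
  have hs : s ≠ w := fun h => not_le_outerExp_of_isCircuit hr hij hst hg (h ▸ hw)
  have ht : t ≠ w := fun h => not_le_outerExp_of_isCircuit hr hij hst.symm
    (neg_binom (K := K) s t ▸ IsCircuit.neg hg) (h ▸ hw)
  simp [coeff_binom, hs, ht]

end Veronese

/-- For `r ≥ 3` the toric ideal of the `r`-th Veronese configuration is not generated by
its circuits; in particular it is not generated by `C_A^sf`. -/
theorem veronese_not_generated_by_circuits (d r : ℕ) (hd : 2 ≤ d) (hr : 3 ≤ r)
    (K : Type*) [Field K] :
    toricIdeal K (Vconfig d r) ≠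
        Ideal.span (Circuits K (toricIdeal K (Vconfig d r))) ∧
      toricIdeal K (Vconfig d r) ≠
        Ideal.span (CircuitsSF K (toricIdeal K (Vconfig d r))) := by
  obtain ⟨i, j, hij⟩ : ∃ i j : Fin d, i ≠ j := ⟨⟨0, by omega⟩, ⟨1, by omega⟩, by simp⟩
  have hf := binom_outerExp_innerExp_mem K i j hr
  have hf_notMem : binom K (outerExp i j hr) (innerExp i j hr) ∉
      Ideal.span (Circuits K (toricIdeal K (Vconfig d r))) := fun hmem => by
    simpa [coeff_binom, (outerExp_ne_innerExp hr hij).symm] using coeff_eq_zero_of_mem_span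
      (fun g hg w hw => coeff_eq_zero_of_mem_circuits hr hij hg hw) hmem
  exact ⟨fun h => hf_notMem (h ▸ hf),
    fun h => hf_notMem (Ideal.span_mono (fun g hg => hg.1) (h ▸ hf))⟩
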